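/- Assume R̃ = 0 and R̂ = 0 on U, and let k ≥ 0. If ξ is a ∇̃-parallel (1,k)-form on U, then d̂ξ is a ∇̃-parallel (1,k+1)-form on U. In other words, the operator d̂ maps ∇̃-parallel vector-valued k-forms to ∇̃-parallel vector-valued (k+1)-forms. -/

import Mathlib

/-- Partial derivative ∂_j f at x. -/
noncomputable def pd {n : ℕ} (f : (Fin n → ℝ) → ℝ) (j : Fin n) (x : Fin n → ℝ) : ℝ :=
  fderiv ℝ f x (Pi.single j 1)

/-- The curvature `R̃^i_{rj,k}`. -/
noncomputable def Rtil {n : ℕ} (Γ : Fin n → Fin n → Fin n → (Fin n → ℝ) → ℝ)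
    (i r j k : Fin n) (x : Fin n → ℝ) : ℝ :=
  pd (Γ i j k) r x - pd (Γ i r k) j x
    + ∑ a, (Γ a r k x * Γ i j a x - Γ a j k x * Γ i r a x)

/-- The curvature `R̂^i_{rj,k}`. -/
noncomputable def Rhat {n : ℕ} (Γ : Fin n → Fin n → Fin n → (Fin n → ℝ) → ℝ)
    (i r j k : Fin n) (x : Fin n → ℝ) : ℝ :=
  pd (Γ i k j) r x - pd (Γ i k r) j x
    + ∑ a, (Γ a k r x * Γ i a j x - Γ a k j x * Γ i a r x)

/-- The covariant derivative of a vector-valued k-form: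
`∇̃_l ξ^i_J = ∂_l ξ^i_J − ∑_a Γ^i_{la} ξ^a_J + ∑_m ∑_a Γ^a_{l J(m)} ξ^i_{J[m↦a]}`. -/
noncomputable def nabForm {n k : ℕ} (Γ : Fin n → Fin n → Fin n → (Fin n → ℝ) → ℝ)
    (ξ : Fin n → (Fin k → Fin n) → (Fin n → ℝ) → ℝ)
    (i : Fin n) (J : Fin k → Fin n) (l : Fin n) (x : Fin n → ℝ) : ℝ :=
  pd (ξ i J) l x - ∑ a, Γ i l a x * ξ a J x
    + ∑ m, ∑ a, Γ a l (J m) x * ξ i (Function.update J m a) x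

/-- `D_r ξ^i_J = ∂_r ξ^i_J − ∑_a Γ^i_{ar} ξ^a_J`. -/
noncomputable def Dform {n k : ℕ} (Γ : Fin n → Fin n → Fin n → (Fin n → ℝ) → ℝ)
    (ξ : Fin n → (Fin k → Fin n) → (Fin n → ℝ) → ℝ)
    (i : Fin n) (J : Fin k → Fin n) (r : Fin n) (x : Fin n → ℝ) : ℝ :=
  pd (ξ i J) r x - ∑ a, Γ i a r x * ξ a J x

/-- The operator d̂: `(d̂ξ)^i_{j₀…j_k} = ∑_{m=0}^{k} (−1)^m D_{j_m} ξ^i_{j₀…ĵ_m…j_k}`. -/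
noncomputable def dhat {n k : ℕ} (Γ : Fin n → Fin n → Fin n → (Fin n → ℝ) → ℝ)
    (ξ : Fin n → (Fin k → Fin n) → (Fin n → ℝ) → ℝ)
    (i : Fin n) (J : Fin (k + 1) → Fin n) (x : Fin n → ℝ) : ℝ :=
  ∑ m : Fin (k + 1), (-1 : ℝ) ^ (m : ℕ) * Dform Γ ξ i (fun l => J (m.succAbove l)) (J m) x

lemma pd_congr_nhds {n : ℕ} {f g : (Fin n → ℝ) → ℝ} {x : Fin n → ℝ} (j : Fin n)
    (h : f =ᶠ[nhds x] g) : pd f j x = pd g j x := by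
  unfold pd; rw [h.fderiv_eq]

lemma pd_const_mul {n : ℕ} (c : ℝ) (f : (Fin n → ℝ) → ℝ) (j : Fin n) (x : Fin n → ℝ) :
    pd (fun y => c * f y) j x = c * pd f j x := by
  rcases eq_or_ne c 0 with h | h
  · simp [h, pd]
  by_cases hf : DifferentiableAt ℝ f x
  · unfold pd
    rw [fderiv_const_mul hf c]; simp
  · have h2 : ¬ DifferentiableAt ℝ (fun y => c * f y) x := by
      intro hc
      have := hc.const_mul c⁻¹
      simp only [← mul_assoc, inv_mul_cancel₀ h, one_mul] at this
      exact hf this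
    unfold pd
    rw [fderiv_zero_of_not_differentiableAt hf, fderiv_zero_of_not_differentiableAt h2]
    simp

lemma pd_mul {n : ℕ} {f g : (Fin n → ℝ) → ℝ} {x : Fin n → ℝ} (j : Fin n)
    (hf : DifferentiableAt ℝ f x) (hg : DifferentiableAt ℝ g x) :
    pd (fun y => f y * g y) j x = pd f j x * g x + f x * pd g j x := by
  unfold pd; rw [fderiv_fun_mul hf hg]; simp [mul_comm]; ring

lemma pd_add {n : ℕ} {f g : (Fin n → ℝ) → ℝ} {x : Fin n → ℝ} (j : Fin n)
    (hf : DifferentiableAt ℝ f x) (hg : DifferentiableAt ℝ g x) :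
    pd (fun y => f y + g y) j x = pd f j x + pd g j x := by
  unfold pd; rw [fderiv_fun_add hf hg]; simp

lemma pd_sub {n : ℕ} {f g : (Fin n → ℝ) → ℝ} {x : Fin n → ℝ} (j : Fin n)
    (hf : DifferentiableAt ℝ f x) (hg : DifferentiableAt ℝ g x) :
    pd (fun y => f y - g y) j x = pd f j x - pd g j x := by
  unfold pd; rw [fderiv_fun_sub hf hg]; simp

lemma pd_sum {n : ℕ} {ι : Type*} {s : Finset ι} {A : ι → (Fin n → ℝ) → ℝ} {x : Fin n → ℝ}
    (j : Fin n) (h : ∀ i ∈ s, DifferentiableAt ℝ (A i) x) :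
    pd (fun y => ∑ i ∈ s, A i y) j x = ∑ i ∈ s, pd (A i) j x := by
  unfold pd; rw [fderiv_fun_sum h]; simp




lemma update_comp_succAbove {k n : ℕ} (J : Fin (k+1) → Fin n) (m : Fin (k+1)) (a : Fin n) :
    (Function.update J m a) ∘ m.succAbove = J ∘ m.succAbove := by
  funext t; simp only [Function.comp_apply]
  exact Function.update_of_ne (Fin.succAbove_ne m t) a J

lemma update_succAbove_comp {k n : ℕ} (J : Fin (k+1) → Fin n) (m : Fin (k+1)) (p : Fin k)
    (a : Fin n) :
    (Function.update J (m.succAbove p) a) ∘ m.succAbove = Function.update (J ∘ m.succAbove) p a := by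
  funext t
  rcases eq_or_ne t p with rfl | h
  · simp
  · simp only [Function.comp_apply]
    rw [Function.update_of_ne ((Fin.succAbove_right_injective (p := m)).ne h),
      Function.update_of_ne h]
    simp

lemma swap_succAbove {k : ℕ} (m : Fin (k+1)) (p q t : Fin k) :
    Equiv.swap (m.succAbove p) (m.succAbove q) (m.succAbove t)
      = m.succAbove (Equiv.swap p q t) := by
  rcases eq_or_ne t p with rfl | hp
  · simp
  · rcases eq_or_ne t q with rfl | hq
    · simp
    · rw [Equiv.swap_apply_of_ne_of_ne ((Fin.succAbove_right_injective (p := m)).ne hp)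
        ((Fin.succAbove_right_injective (p := m)).ne hq),
        Equiv.swap_apply_of_ne_of_ne hp hq]

lemma swap_succAbove_adj {k : ℕ} (q q' : Fin (k+1)) (hq : (q' : ℕ) = (q : ℕ) + 1) (t : Fin k) :
    Equiv.swap q q' (q.succAbove t) = q'.succAbove t := by
  rcases lt_or_ge t.castSucc q with h | h
  · have hv : (t : ℕ) < (q : ℕ) := by simpa [Fin.lt_def] using h
    rw [Fin.succAbove_of_castSucc_lt _ _ h,
      Fin.succAbove_of_castSucc_lt _ _ (by simp [Fin.lt_def]; omega)]
    exact Equiv.swap_apply_of_ne_of_ne (ne_of_lt h)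
      (by simp only [Fin.ne_iff_vne, Fin.coe_castSucc]; omega)
  · have hv : (q : ℕ) ≤ (t : ℕ) := by simpa [Fin.le_def] using h
    rw [Fin.succAbove_of_le_castSucc _ _ h]
    rcases eq_or_lt_of_le hv with he | hlt
    · have h1 : t.succ = q' := by simp [Fin.ext_iff, ← he, hq]
      have h2 : q'.succAbove t = t.castSucc := by
        apply Fin.succAbove_of_castSucc_lt; simp [Fin.lt_def]; omega
      rw [h1, Equiv.swap_apply_right, h2]
      simp [Fin.ext_iff, ← he]
    · have h1 : q'.succAbove t = t.succ := by
        apply Fin.succAbove_of_le_castSucc; simp [Fin.le_def]; omega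
      rw [h1]
      apply Equiv.swap_apply_of_ne_of_ne
      · simp only [Fin.ne_iff_vne, Fin.val_succ]; omega
      · simp only [Fin.ne_iff_vne, Fin.val_succ]; omega

lemma update_succAbove_adj {k n : ℕ} (J : Fin (k+1) → Fin n) (a : Fin n) (m q : Fin (k+1))
    (hq : (q : ℕ) = (m : ℕ) + 1) :
    (Function.update J q a) ∘ m.succAbove = (Function.update J m a) ∘ q.succAbove := by
  funext t
  simp only [Function.comp_apply]
  rcases lt_or_ge t.castSucc m with h | h
  · have hv : (t : ℕ) < (m : ℕ) := by simpa [Fin.lt_def] using h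
    rw [Fin.succAbove_of_castSucc_lt _ _ h,
      Fin.succAbove_of_castSucc_lt _ _ (by simp [Fin.lt_def]; omega),
      Function.update_of_ne (by simp only [Fin.ne_iff_vne, Fin.coe_castSucc]; omega),
      Function.update_of_ne (by simp only [Fin.ne_iff_vne, Fin.coe_castSucc]; omega)]
  · have hv : (m : ℕ) ≤ (t : ℕ) := by simpa [Fin.le_def] using h
    rw [Fin.succAbove_of_le_castSucc _ _ h]
    rcases eq_or_lt_of_le hv with he | hlt
    · have h1 : t.succ = q := by simp [Fin.ext_iff, ← he, hq]
      have h2 : q.succAbove t = m := by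
        rw [Fin.succAbove_of_castSucc_lt _ _ (by simp [Fin.lt_def]; omega)]
        simp [Fin.ext_iff, ← he]
      rw [h1, h2]; simp
    · have h1 : q.succAbove t = t.succ := by
        apply Fin.succAbove_of_le_castSucc; simp [Fin.le_def]; omega
      rw [h1,
        Function.update_of_ne (by simp only [Fin.ne_iff_vne, Fin.val_succ]; omega),
        Function.update_of_ne (by simp only [Fin.ne_iff_vne, Fin.val_succ]; omega)]

lemma update_as_swap {k n : ℕ} (J : Fin (k+1) → Fin n) (a : Fin n) (q q' : Fin (k+1))
    (hne : q ≠ q') :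
    Function.update J q' a = (Function.update (J ∘ (Equiv.swap q q')) q a) ∘ (Equiv.swap q q') := by
  funext t
  simp only [Function.comp_apply]
  rcases eq_or_ne t q' with rfl | h1
  · rw [Equiv.swap_apply_right]; simp
  · rcases eq_or_ne t q with rfl | h2
    · rw [Equiv.swap_apply_left, Function.update_of_ne (Ne.symm hne),
        Function.update_of_ne hne]
      simp [Equiv.swap_apply_right]
    · rw [Equiv.swap_apply_of_ne_of_ne h2 h1, Function.update_of_ne h1,
        Function.update_of_ne h2]
      simp [Equiv.swap_apply_of_ne_of_ne h2 h1]

lemma update_comp_swap {k n : ℕ} (J : Fin (k+1) → Fin n) (a : Fin n) (m q q' : Fin (k+1))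
    (hmq : m ≠ q) (hmq' : m ≠ q') :
    Function.update (J ∘ (Equiv.swap q q')) m a = (Function.update J m a) ∘ (Equiv.swap q q') := by
  funext t
  simp only [Function.comp_apply]
  rcases eq_or_ne t m with rfl | h
  · rw [Equiv.swap_apply_of_ne_of_ne hmq hmq']; simp
  · rw [Function.update_of_ne h]
    have : Equiv.swap q q' t ≠ m := by
      rcases eq_or_ne t q with rfl | h2
      · rw [Equiv.swap_apply_left]; exact Ne.symm hmq'
      · rcases eq_or_ne t q' with rfl | h3
        · rw [Equiv.swap_apply_right]; exact Ne.symm hmq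
        · rw [Equiv.swap_apply_of_ne_of_ne h2 h3]; exact h
    rw [Function.update_of_ne this]
    simp


lemma kcl_lt {k n : ℕ} (S : (Fin k → Fin n) → ℝ)
    (hS : ∀ (J : Fin k → Fin n) (σ : Equiv.Perm (Fin k)),
      S (J ∘ σ) = ((Equiv.Perm.sign σ : ℤ) : ℝ) * S J) :
    ∀ (d : ℕ) (J : Fin (k+1) → Fin n) (a : Fin n) (m q : Fin (k+1)),
      (q : ℕ) = (m : ℕ) + 1 + d →
      S (Function.update J q a ∘ m.succAbove)
        = -((-1:ℝ)^((m:ℕ)+(q:ℕ))) * S (Function.update J m a ∘ q.succAbove) := by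
  intro d
  induction d with
  | zero =>
    intro J a m q hq
    rw [update_succAbove_adj J a m q (by omega)]
    have h2 : (m:ℕ)+(q:ℕ) = 2*(m:ℕ)+1 := by omega
    rw [h2, pow_succ, pow_mul]
    norm_num
  | succ d ih =>
    intro J a m q hq
    set q₀ : Fin (k+1) := ⟨(q:ℕ) - 1, by have := q.isLt; omega⟩ with hq₀
    have hq₀v : (q₀:ℕ) = (m:ℕ)+1+d := by simp [hq₀]; omega
    have hq' : (q:ℕ) = (q₀:ℕ)+1 := by simp [hq₀]; omega
    have hne0 : q₀ ≠ q := by simp [Fin.ne_iff_vne]; omega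
    have hmq₀ : m ≠ q₀ := by simp [Fin.ne_iff_vne]; omega
    obtain ⟨p₀, hp₀⟩ := Fin.exists_succAbove_eq (Ne.symm hmq₀)
    obtain ⟨p₁, hp₁⟩ := Fin.exists_succAbove_eq (show q ≠ m by simp [Fin.ne_iff_vne]; omega)
    have hpne : p₀ ≠ p₁ := by
      intro hcon; apply hne0; rw [← hp₀, ← hp₁, hcon]
    have e2 : ∀ t, Equiv.swap q₀ q (m.succAbove t) = m.succAbove (Equiv.swap p₀ p₁ t) := by
      intro t; rw [← hp₀, ← hp₁]; exact swap_succAbove m p₀ p₁ t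
    have step1 : S (Function.update J q a ∘ m.succAbove)
        = S (((Function.update (J ∘ (Equiv.swap q₀ q)) q₀ a) ∘ m.succAbove) ∘ (Equiv.swap p₀ p₁)) := by
      congr 1
      rw [update_as_swap J a q₀ q hne0]
      funext t
      simp only [Function.comp_apply]
      rw [e2 t]
    rw [step1, hS _ (Equiv.swap p₀ p₁), Equiv.Perm.sign_swap hpne,
      ih (J ∘ (Equiv.swap q₀ q)) a m q₀ hq₀v,
      update_comp_swap J a m q₀ q hmq₀ (by simp [Fin.ne_iff_vne]; omega)]
    have e3 : ((Function.update J m a) ∘ (Equiv.swap q₀ q)) ∘ q₀.succAbove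
        = (Function.update J m a) ∘ q.succAbove := by
      funext t
      simp only [Function.comp_apply]
      rw [swap_succAbove_adj q₀ q hq' t]
    rw [e3]
    have h4 : (m:ℕ)+(q:ℕ) = ((m:ℕ)+(q₀:ℕ)) + 1 := by omega
    rw [h4, pow_succ]
    push_cast
    ring

lemma kcl {k n : ℕ} (S : (Fin k → Fin n) → ℝ)
    (hS : ∀ (J : Fin k → Fin n) (σ : Equiv.Perm (Fin k)),
      S (J ∘ σ) = ((Equiv.Perm.sign σ : ℤ) : ℝ) * S J)
    (J : Fin (k+1) → Fin n) (a : Fin n) (m q : Fin (k+1)) (h : m ≠ q) :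
    S (Function.update J q a ∘ m.succAbove)
      = -((-1:ℝ)^((m:ℕ)+(q:ℕ))) * S (Function.update J m a ∘ q.succAbove) := by
  rcases lt_or_gt_of_ne (show (m:ℕ) ≠ (q:ℕ) by simpa [Fin.ne_iff_vne] using h) with hlt | hgt
  · exact kcl_lt S hS ((q:ℕ) - (m:ℕ) - 1) J a m q (by omega)
  · have h2 := kcl_lt S hS ((m:ℕ) - (q:ℕ) - 1) J a q m (by omega)
    have hcc : (-((-1:ℝ)^((q:ℕ)+(m:ℕ)))) * (-((-1:ℝ)^((m:ℕ)+(q:ℕ)))) = 1 := by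
      rw [neg_mul_neg, ← pow_add]
      exact Even.neg_one_pow ⟨(m:ℕ)+(q:ℕ), by omega⟩
    calc S (Function.update J q a ∘ m.succAbove)
        = (-((-1:ℝ)^((q:ℕ)+(m:ℕ)))) * (-((-1:ℝ)^((m:ℕ)+(q:ℕ)))) * S (Function.update J q a ∘ m.succAbove) := by
          rw [hcc, one_mul]
      _ = -((-1:ℝ)^((m:ℕ)+(q:ℕ))) * ((-((-1:ℝ)^((q:ℕ)+(m:ℕ)))) * S (Function.update J q a ∘ m.succAbove)) := by ring
      _ = -((-1:ℝ)^((m:ℕ)+(q:ℕ))) * S (Function.update J m a ∘ q.succAbove) := by rw [← h2]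


section
variable {n k : ℕ} (Γ : Fin n → Fin n → Fin n → (Fin n → ℝ) → ℝ)
  (ξ : Fin n → (Fin k → Fin n) → (Fin n → ℝ) → ℝ)

lemma Dform_reindex (i : Fin n) (r : Fin n) (x : Fin n → ℝ) (c : ℝ)
    (K K' : Fin k → Fin n) (hK : ∀ b y, ξ b K' y = c * ξ b K y) :
    Dform Γ ξ i K' r x = c * Dform Γ ξ i K r x := by
  unfold Dform
  have h1 : ξ i K' = fun y => c * ξ i K y := funext (hK i)
  rw [h1, pd_const_mul,
    show (∑ a, Γ i a r x * ξ a K' x) = c * ∑ a, Γ i a r x * ξ a K x by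
      rw [Finset.mul_sum]
      exact Finset.sum_congr rfl fun a _ => by rw [hK a x]; ring]
  ring

variable (halt : ∀ i (J : Fin k → Fin n) (σ : Equiv.Perm (Fin k)) (x : Fin n → ℝ),
      ξ i (J ∘ σ) x = ((Equiv.Perm.sign σ : ℤ) : ℝ) * ξ i J x)

include halt

lemma dhat_swap (i : Fin n) (J : Fin (k+1) → Fin n) (x : Fin n → ℝ)
    (u v : Fin (k+1)) (huv : u ≠ v) :
    dhat Γ ξ i (J ∘ (Equiv.swap u v)) x = - dhat Γ ξ i J x := by
  unfold dhat
  rw [show -(∑ m : Fin (k+1), (-1:ℝ)^(m:ℕ) * Dform Γ ξ i (fun l => J (m.succAbove l)) (J m) x)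
      = ∑ m : Fin (k+1), -((-1:ℝ)^((Equiv.swap u v m : Fin (k+1)):ℕ)
          * Dform Γ ξ i (fun l => J ((Equiv.swap u v m).succAbove l)) (J (Equiv.swap u v m)) x) by
    rw [← Finset.sum_neg_distrib]
    exact (Equiv.sum_comp (Equiv.swap u v) _).symm]
  refine Finset.sum_congr rfl fun m _ => ?_
  rcases eq_or_ne m u with rfl | hmu
  · rw [Equiv.swap_apply_left]
    have e1 : (fun l => (J ∘ (Equiv.swap m v)) (m.succAbove l))
        = Function.update J v (J m) ∘ m.succAbove := by
      funext t
      simp only [Function.comp_apply]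
      rcases eq_or_ne (m.succAbove t) v with hv | hv
      · rw [hv, Equiv.swap_apply_right, Function.update_self]
      · rw [Equiv.swap_apply_of_ne_of_ne (Fin.succAbove_ne m t) hv, Function.update_of_ne hv]
    have e2 : ∀ b y, ξ b (Function.update J v (J m) ∘ m.succAbove) y
        = (-((-1:ℝ)^((m:ℕ)+(v:ℕ)))) * ξ b (fun l => J (v.succAbove l)) y := by
      intro b y
      have := kcl (fun K => ξ b K y) (fun K σ => halt b K σ y) J (J m) m v huv
      rwa [Function.update_eq_self, show J ∘ v.succAbove = fun l => J (v.succAbove l) from rfl] at this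
    have e3 : (J ∘ (Equiv.swap m v)) m = J v := by simp
    rw [e3, e1, Dform_reindex Γ ξ i (J v) x _ _ _ e2]
    have hm : ((-1:ℝ))^((m:ℕ)) * ((-1:ℝ))^((m:ℕ)) = 1 := by
      rw [← pow_add]; exact Even.neg_one_pow ⟨(m:ℕ), rfl⟩
    linear_combination (-((-1:ℝ)^((v:ℕ)) * Dform Γ ξ i (fun l => J (v.succAbove l)) (J v) x)) * hm
  rcases eq_or_ne m v with rfl | hmv
  · rw [Equiv.swap_apply_right]
    have e1 : (fun l => (J ∘ (Equiv.swap u m)) (m.succAbove l))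
        = Function.update J u (J m) ∘ m.succAbove := by
      funext t
      simp only [Function.comp_apply]
      rcases eq_or_ne (m.succAbove t) u with hv | hv
      · rw [hv, Equiv.swap_apply_left, Function.update_self]
      · rw [Equiv.swap_apply_of_ne_of_ne hv (Fin.succAbove_ne m t), Function.update_of_ne hv]
    have e2 : ∀ b y, ξ b (Function.update J u (J m) ∘ m.succAbove) y
        = (-((-1:ℝ)^((m:ℕ)+(u:ℕ)))) * ξ b (fun l => J (u.succAbove l)) y := by
      intro b y
      have := kcl (fun K => ξ b K y) (fun K σ => halt b K σ y) J (J m) m u (Ne.symm huv)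
      rwa [Function.update_eq_self, show J ∘ u.succAbove = fun l => J (u.succAbove l) from rfl] at this
    have e3 : (J ∘ (Equiv.swap u m)) m = J u := by simp
    rw [e3, e1, Dform_reindex Γ ξ i (J u) x _ _ _ e2]
    have hm : ((-1:ℝ))^((m:ℕ)) * ((-1:ℝ))^((m:ℕ)) = 1 := by
      rw [← pow_add]; exact Even.neg_one_pow ⟨(m:ℕ), rfl⟩
    linear_combination (-((-1:ℝ)^((u:ℕ)) * Dform Γ ξ i (fun l => J (u.succAbove l)) (J u) x)) * hm
  · rw [Equiv.swap_apply_of_ne_of_ne hmu hmv]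
    obtain ⟨p, hp⟩ := Fin.exists_succAbove_eq (Ne.symm hmu)
    obtain ⟨q, hq⟩ := Fin.exists_succAbove_eq (Ne.symm hmv)
    have hpq : p ≠ q := by intro hc; apply huv; rw [← hp, ← hq, hc]
    have e1 : (fun l => (J ∘ (Equiv.swap u v)) (m.succAbove l))
        = (fun l => J (m.succAbove l)) ∘ (Equiv.swap p q) := by
      funext t
      simp only [Function.comp_apply]
      rw [← hp, ← hq, swap_succAbove]
    have e2 : ∀ b y, ξ b ((fun l => J (m.succAbove l)) ∘ (Equiv.swap p q)) y
        = (-1 : ℝ) * ξ b (fun l => J (m.succAbove l)) y := by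
      intro b y
      rw [halt b _ (Equiv.swap p q) y, Equiv.Perm.sign_swap hpq]
      norm_num
    have e3 : (J ∘ (Equiv.swap u v)) m = J m := by
      simp only [Function.comp_apply]
      rw [Equiv.swap_apply_of_ne_of_ne hmu hmv]
    rw [e3, e1, Dform_reindex Γ ξ i (J m) x _ _ _ e2]
    ring

lemma dhat_alt (i : Fin n) (J : Fin (k+1) → Fin n) (σ : Equiv.Perm (Fin (k+1)))
    (x : Fin n → ℝ) :
    dhat Γ ξ i (J ∘ σ) x = ((Equiv.Perm.sign σ : ℤ) : ℝ) * dhat Γ ξ i J x := by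
  have H : ∀ (σ : Equiv.Perm (Fin (k+1))) (J : Fin (k+1) → Fin n),
      dhat Γ ξ i (J ∘ σ) x = ((Equiv.Perm.sign σ : ℤ) : ℝ) * dhat Γ ξ i J x := by
    intro σ
    refine Equiv.Perm.swap_induction_on σ (by intro J; simp) ?_
    intro f u v huv ih J
    have e1 : J ∘ ⇑(Equiv.swap u v * f) = (J ∘ (Equiv.swap u v)) ∘ f := by
      funext t; simp [Equiv.Perm.mul_apply]
    rw [e1, ih (J ∘ (Equiv.swap u v)), dhat_swap Γ ξ halt i J x u v huv,
      Equiv.Perm.sign_mul, Equiv.Perm.sign_swap huv]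
    push_cast
    ring
  exact H σ J
end


noncomputable def Phi {n k : ℕ} (Γ : Fin n → Fin n → Fin n → (Fin n → ℝ) → ℝ)
    (ξ : Fin n → (Fin k → Fin n) → (Fin n → ℝ) → ℝ)
    (i : Fin n) (K : Fin k → Fin n) (r : Fin n) (y : Fin n → ℝ) : ℝ :=
  ∑ a, (Γ i r a y - Γ i a r y) * ξ a K y
    - ∑ p, ∑ a, Γ a r (K p) y * ξ i (Function.update K p a) y

section
variable {n k : ℕ} {U : Set (Fin n → ℝ)} (hU : IsOpen U)
  {Γ : Fin n → Fin n → Fin n → (Fin n → ℝ) → ℝ}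
  (hΓ : ∀ i a b, ContDiffOn ℝ (⊤ : ℕ∞) (Γ i a b) U)
  {ξ : Fin n → (Fin k → Fin n) → (Fin n → ℝ) → ℝ}
  (hsm : ∀ i J, ContDiffOn ℝ (⊤ : ℕ∞) (ξ i J) U)

include hU hΓ in
lemma diffG {x : Fin n → ℝ} (hx : x ∈ U) (i a b : Fin n) :
    DifferentiableAt ℝ (Γ i a b) x :=
  ((hΓ i a b).contDiffAt (hU.mem_nhds hx)).differentiableAt (by simp)

include hU hsm in
lemma diffX {x : Fin n → ℝ} (hx : x ∈ U) (i : Fin n) (K : Fin k → Fin n) :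
    DifferentiableAt ℝ (ξ i K) x :=
  ((hsm i K).contDiffAt (hU.mem_nhds hx)).differentiableAt (by simp)

include hU hΓ hsm in
lemma diffPhi {x : Fin n → ℝ} (hx : x ∈ U) (i : Fin n) (K : Fin k → Fin n) (r : Fin n) :
    DifferentiableAt ℝ (Phi Γ ξ i K r) x := by
  unfold Phi
  apply DifferentiableAt.sub
  · exact DifferentiableAt.fun_sum fun a _ =>
      (((diffG hU hΓ hx i r a).sub (diffG hU hΓ hx i a r)).mul (diffX hU hsm hx a K))
  · exact DifferentiableAt.fun_sum fun p _ => DifferentiableAt.fun_sum fun a _ =>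
      ((diffG hU hΓ hx a r (K p)).mul (diffX hU hsm hx i (Function.update K p a)))

variable (hpar : ∀ x ∈ U, ∀ i J l, nabForm Γ ξ i J l x = 0)

include hpar in
lemma pd_xi {x : Fin n → ℝ} (hx : x ∈ U) (i : Fin n) (K : Fin k → Fin n) (r : Fin n) :
    pd (ξ i K) r x = ∑ a, Γ i r a x * ξ a K x
      - ∑ p, ∑ a, Γ a r (K p) x * ξ i (Function.update K p a) x := by
  have h := hpar x hx i K r
  unfold nabForm at h
  linarith

include hpar in
lemma D_eq_Phi {x : Fin n → ℝ} (hx : x ∈ U) (i : Fin n) (K : Fin k → Fin n) (r : Fin n) :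
    Dform Γ ξ i K r x = Phi Γ ξ i K r x := by
  unfold Dform Phi
  rw [pd_xi hpar hx i K r,
    show (∑ a, (Γ i r a x - Γ i a r x) * ξ a K x)
      = ∑ a, Γ i r a x * ξ a K x - ∑ a, Γ i a r x * ξ a K x by
        rw [← Finset.sum_sub_distrib]
        exact Finset.sum_congr rfl fun a _ => by ring]
  ring
end


section
variable {n k : ℕ} {U : Set (Fin n → ℝ)}
  {Γ : Fin n → Fin n → Fin n → (Fin n → ℝ) → ℝ}
  {ξ : Fin n → (Fin k → Fin n) → (Fin n → ℝ) → ℝ}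
  {x : Fin n → ℝ}
  (hdX : ∀ i K, DifferentiableAt ℝ (ξ i K) x)
  (hpdxi : ∀ i (K : Fin k → Fin n) r, pd (ξ i K) r x = ∑ a, Γ i r a x * ξ a K x
      - ∑ p, ∑ a, Γ a r (K p) x * ξ i (Function.update K p a) x)

include hdX hpdxi in
lemma CL1 (t : Fin n → Fin n → (Fin n → ℝ) → ℝ)
    (hdt : ∀ b a, DifferentiableAt ℝ (t b a) x) (i : Fin n) (K : Fin k → Fin n) (l : Fin n) :
    pd (fun y => ∑ a, t i a y * ξ a K y) l x
      - ∑ b, Γ i l b x * (∑ a, t b a x * ξ a K x)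
      + ∑ p, ∑ b, Γ b l (K p) x * (∑ a, t i a x * ξ a (Function.update K p b) x)
    = ∑ a, (pd (t i a) l x + ∑ b, (t i b x * Γ b l a x - Γ i l b x * t b a x)) * ξ a K x := by
  have h1 : pd (fun y => ∑ a, t i a y * ξ a K y) l x
      = ∑ a, pd (t i a) l x * ξ a K x
        + ∑ a, ∑ b, t i a x * (Γ a l b x * ξ b K x)
        - ∑ a, ∑ p, ∑ b, t i a x * (Γ b l (K p) x * ξ a (Function.update K p b) x) := by
    rw [pd_sum l (fun a _ => (hdt i a).fun_mul (hdX a K))]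
    rw [show (∑ a, pd (fun y => t i a y * ξ a K y) l x)
        = ∑ a, (pd (t i a) l x * ξ a K x
            + (∑ b, t i a x * (Γ a l b x * ξ b K x)
              - ∑ p, ∑ b, t i a x * (Γ b l (K p) x * ξ a (Function.update K p b) x))) by
      refine Finset.sum_congr rfl fun a _ => ?_
      rw [pd_mul l (hdt i a) (hdX a K), hpdxi a K l, mul_sub]
      congr 2
      · exact Finset.mul_sum _ _ _
      · rw [Finset.mul_sum]
        exact Finset.sum_congr rfl fun p _ => Finset.mul_sum _ _ _]
    rw [Finset.sum_add_distrib, Finset.sum_sub_distrib]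
    ring
  have h2 : ∑ b, Γ i l b x * (∑ a, t b a x * ξ a K x)
      = ∑ a, (∑ b, Γ i l b x * t b a x) * ξ a K x := by
    rw [show (∑ b, Γ i l b x * (∑ a, t b a x * ξ a K x))
        = ∑ b, ∑ a, Γ i l b x * t b a x * ξ a K x by
      refine Finset.sum_congr rfl fun b _ => ?_
      rw [Finset.mul_sum]
      exact Finset.sum_congr rfl fun a _ => by ring]
    rw [Finset.sum_comm]
    exact Finset.sum_congr rfl fun a _ => by rw [Finset.sum_mul]
  have h3 : ∑ p, ∑ b, Γ b l (K p) x * (∑ a, t i a x * ξ a (Function.update K p b) x)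
      = ∑ a, ∑ p, ∑ b, t i a x * (Γ b l (K p) x * ξ a (Function.update K p b) x) := by
    rw [show (∑ p, ∑ b, Γ b l (K p) x * (∑ a, t i a x * ξ a (Function.update K p b) x))
        = ∑ p, ∑ a, ∑ b, t i a x * (Γ b l (K p) x * ξ a (Function.update K p b) x) by
      refine Finset.sum_congr rfl fun p _ => ?_
      rw [show (∑ b, Γ b l (K p) x * (∑ a, t i a x * ξ a (Function.update K p b) x))
          = ∑ b, ∑ a, t i a x * (Γ b l (K p) x * ξ a (Function.update K p b) x) by
        refine Finset.sum_congr rfl fun b _ => ?_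
        rw [Finset.mul_sum]
        exact Finset.sum_congr rfl fun a _ => by ring]
      rw [Finset.sum_comm]]
    rw [Finset.sum_comm]
  have h4 : ∑ a, ∑ b, t i a x * (Γ a l b x * ξ b K x)
      = ∑ a, (∑ b, t i b x * Γ b l a x) * ξ a K x := by
    rw [Finset.sum_comm]
    refine Finset.sum_congr rfl fun a _ => ?_
    rw [Finset.sum_mul]
    exact Finset.sum_congr rfl fun b _ => by ring
  have h5 : ∑ a, (pd (t i a) l x + ∑ b, (t i b x * Γ b l a x - Γ i l b x * t b a x)) * ξ a K x
      = ∑ a, pd (t i a) l x * ξ a K x + ∑ a, (∑ b, t i b x * Γ b l a x) * ξ a K x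
        - ∑ a, (∑ b, Γ i l b x * t b a x) * ξ a K x := by
    rw [← Finset.sum_add_distrib, ← Finset.sum_sub_distrib]
    refine Finset.sum_congr rfl fun a _ => ?_
    rw [Finset.sum_sub_distrib]
    ring
  rw [h1, h2, h3, h4, h5]
  ring
end


lemma sum_erase_swap {M : Type*} [AddCommMonoid M] {α : Type*} [DecidableEq α]
    (s : Finset α) (f : α → α → M) :
    ∑ p ∈ s, ∑ q ∈ s.erase p, f p q = ∑ p ∈ s, ∑ q ∈ s.erase p, f q p := by
  have e : ∀ (g : α → α → M), ∑ p ∈ s, ∑ q ∈ s.erase p, g p q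
      = ∑ p ∈ s, ∑ q ∈ s, if q ≠ p then g p q else 0 := by
    intro g
    refine Finset.sum_congr rfl fun p _ => ?_
    rw [← Finset.filter_ne', Finset.sum_filter]
  rw [e f, e (fun p q => f q p), Finset.sum_comm]
  refine Finset.sum_congr rfl fun p _ => Finset.sum_congr rfl fun q _ => ?_
  by_cases h : q = p
  · simp [h]
  · simp [h, Ne.symm h]

section
variable {n k : ℕ}
  {Γ : Fin n → Fin n → Fin n → (Fin n → ℝ) → ℝ}
  {ξ : Fin n → (Fin k → Fin n) → (Fin n → ℝ) → ℝ}
  {x : Fin n → ℝ}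
  (hdX : ∀ i K, DifferentiableAt ℝ (ξ i K) x)
  (hpdxi : ∀ i (K : Fin k → Fin n) r, pd (ξ i K) r x = ∑ a, Γ i r a x * ξ a K x
      - ∑ p, ∑ a, Γ a r (K p) x * ξ i (Function.update K p a) x)

include hdX hpdxi in
lemma CL2 (c : Fin n → Fin n → (Fin n → ℝ) → ℝ)
    (hdc : ∀ a w, DifferentiableAt ℝ (c a w) x) (i : Fin n) (K : Fin k → Fin n) (l : Fin n) :
    pd (fun y => ∑ p, ∑ a, c a (K p) y * ξ i (Function.update K p a) y) l x
      - ∑ b, Γ i l b x * (∑ p, ∑ a, c a (K p) x * ξ b (Function.update K p a) x)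
      + ∑ q, ∑ b, Γ b l (K q) x *
          (∑ p, ∑ a, c a (Function.update K q b p) x
            * ξ i (Function.update (Function.update K q b) p a) x)
    = ∑ p, ∑ a, (pd (c a (K p)) l x - ∑ b, Γ a l b x * c b (K p) x
        + ∑ b, Γ b l (K p) x * c a b x) * ξ i (Function.update K p a) x := by
  classical
  -- key pointwise expansion of c * pd ξ
  have key : ∀ (p : Fin k) (a : Fin n),
      c a (K p) x * pd (ξ i (Function.update K p a)) l x
      = (∑ b, c a (K p) x * (Γ i l b x * ξ b (Function.update K p a) x))
        - (∑ b, c a (K p) x * (Γ b l a x * ξ i (Function.update K p b) x))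
        - ∑ q ∈ Finset.univ.erase p, ∑ b,
            c a (K p) x * (Γ b l (K q) x
              * ξ i (Function.update (Function.update K p a) q b) x) := by
    intro p a
    rw [hpdxi i (Function.update K p a) l]
    have split : (∑ q, ∑ b, Γ b l (Function.update K p a q) x
          * ξ i (Function.update (Function.update K p a) q b) x)
        = (∑ b, Γ b l a x * ξ i (Function.update K p b) x)
          + ∑ q ∈ Finset.univ.erase p, ∑ b, Γ b l (K q) x
              * ξ i (Function.update (Function.update K p a) q b) x := by
      rw [← Finset.add_sum_erase _ _ (Finset.mem_univ p)]
      congr 1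
      · refine Finset.sum_congr rfl fun b _ => ?_
        rw [Function.update_self, Function.update_idem]
      · refine Finset.sum_congr rfl fun q hq => Finset.sum_congr rfl fun b _ => ?_
        rw [Function.update_of_ne (Finset.ne_of_mem_erase hq)]
    rw [split, mul_sub, mul_add, Finset.mul_sum, Finset.mul_sum, Finset.mul_sum]
    rw [show (∑ q ∈ Finset.univ.erase p, c a (K p) x * ∑ b, Γ b l (K q) x
          * ξ i (Function.update (Function.update K p a) q b) x)
        = ∑ q ∈ Finset.univ.erase p, ∑ b, c a (K p) x * (Γ b l (K q) x
          * ξ i (Function.update (Function.update K p a) q b) x) from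
      Finset.sum_congr rfl fun q _ => Finset.mul_sum _ _ _]
    ring
  -- h1 : expansion of pd v
  have h1 : pd (fun y => ∑ p, ∑ a, c a (K p) y * ξ i (Function.update K p a) y) l x
      = (∑ p, ∑ a, pd (c a (K p)) l x * ξ i (Function.update K p a) x)
        + (∑ p, ∑ a, ∑ b, c a (K p) x * (Γ i l b x * ξ b (Function.update K p a) x))
        - (∑ p, ∑ a, ∑ b, c a (K p) x * (Γ b l a x * ξ i (Function.update K p b) x))
        - ∑ p, ∑ a, ∑ q ∈ Finset.univ.erase p, ∑ b,
            c a (K p) x * (Γ b l (K q) x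
              * ξ i (Function.update (Function.update K p a) q b) x) := by
    rw [pd_sum l (fun p _ => DifferentiableAt.fun_sum fun a _ =>
      (hdc a (K p)).fun_mul (hdX i (Function.update K p a)))]
    rw [show (∑ p, pd (fun y => ∑ a, c a (K p) y * ξ i (Function.update K p a) y) l x)
        = ∑ p, ∑ a, (pd (c a (K p)) l x * ξ i (Function.update K p a) x
            + ((∑ b, c a (K p) x * (Γ i l b x * ξ b (Function.update K p a) x))
              - (∑ b, c a (K p) x * (Γ b l a x * ξ i (Function.update K p b) x))
              - ∑ q ∈ Finset.univ.erase p, ∑ b,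
                  c a (K p) x * (Γ b l (K q) x
                    * ξ i (Function.update (Function.update K p a) q b) x))) from ?_]
    · simp only [Finset.sum_add_distrib, Finset.sum_sub_distrib]
      ring
    · refine Finset.sum_congr rfl fun p _ => ?_
      rw [pd_sum l (fun a _ => (hdc a (K p)).fun_mul (hdX i (Function.update K p a)))]
      refine Finset.sum_congr rfl fun a _ => ?_
      rw [pd_mul l (hdc a (K p)) (hdX i (Function.update K p a)), key p a]
  -- h2
  have h2 : (∑ b, Γ i l b x * (∑ p, ∑ a, c a (K p) x * ξ b (Function.update K p a) x))
      = ∑ p, ∑ a, ∑ b, c a (K p) x * (Γ i l b x * ξ b (Function.update K p a) x) := by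
    rw [show (∑ b, Γ i l b x * (∑ p, ∑ a, c a (K p) x * ξ b (Function.update K p a) x))
        = ∑ b, ∑ p, ∑ a, c a (K p) x * (Γ i l b x * ξ b (Function.update K p a) x) by
      refine Finset.sum_congr rfl fun b _ => ?_
      rw [Finset.mul_sum]
      refine Finset.sum_congr rfl fun p _ => ?_
      rw [Finset.mul_sum]
      exact Finset.sum_congr rfl fun a _ => by ring]
    rw [Finset.sum_comm]
    exact Finset.sum_congr rfl fun p _ => Finset.sum_comm
  -- h3 : third term = E + D
  have h3 : (∑ q, ∑ b, Γ b l (K q) x *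
        (∑ p, ∑ a, c a (Function.update K q b p) x
          * ξ i (Function.update (Function.update K q b) p a) x))
      = (∑ p, ∑ a, ∑ b, Γ b l (K p) x * (c a b x * ξ i (Function.update K p a) x))
        + ∑ p, ∑ a, ∑ q ∈ Finset.univ.erase p, ∑ b,
            c a (K p) x * (Γ b l (K q) x
              * ξ i (Function.update (Function.update K p a) q b) x) := by
    have step1 : (∑ q, ∑ b, Γ b l (K q) x *
        (∑ p, ∑ a, c a (Function.update K q b p) x
          * ξ i (Function.update (Function.update K q b) p a) x))
        = ∑ q, ∑ b, ((∑ a, Γ b l (K q) x * (c a b x * ξ i (Function.update K q a) x))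
            + ∑ p ∈ Finset.univ.erase q, ∑ a, Γ b l (K q) x * (c a (K p) x
                * ξ i (Function.update (Function.update K q b) p a) x)) := by
      refine Finset.sum_congr rfl fun q _ => Finset.sum_congr rfl fun b _ => ?_
      rw [show (∑ p, ∑ a, c a (Function.update K q b p) x
            * ξ i (Function.update (Function.update K q b) p a) x)
          = (∑ a, c a b x * ξ i (Function.update K q a) x)
            + ∑ p ∈ Finset.univ.erase q, ∑ a, c a (K p) x
                * ξ i (Function.update (Function.update K q b) p a) x by
        rw [← Finset.add_sum_erase _ _ (Finset.mem_univ q)]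
        congr 1
        · refine Finset.sum_congr rfl fun a _ => ?_
          rw [Function.update_self, Function.update_idem]
        · refine Finset.sum_congr rfl fun p hp => Finset.sum_congr rfl fun a _ => ?_
          rw [Function.update_of_ne (Finset.ne_of_mem_erase hp)]]
      rw [mul_add, Finset.mul_sum]
      congr 1
      rw [Finset.mul_sum]
      exact Finset.sum_congr rfl fun p _ => Finset.mul_sum _ _ _
    rw [step1]
    simp only [Finset.sum_add_distrib]
    congr 1
    · exact Finset.sum_congr rfl fun q _ => Finset.sum_comm
    · -- the double-update block
      rw [show (∑ q, ∑ b, ∑ p ∈ Finset.univ.erase q, ∑ a, Γ b l (K q) x * (c a (K p) x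
              * ξ i (Function.update (Function.update K q b) p a) x))
          = ∑ q, ∑ p ∈ Finset.univ.erase q, ∑ a, ∑ b, Γ b l (K q) x * (c a (K p) x
              * ξ i (Function.update (Function.update K q b) p a) x) from
        Finset.sum_congr rfl fun q _ => by
          rw [Finset.sum_comm]
          exact Finset.sum_congr rfl fun p _ => Finset.sum_comm]
      rw [sum_erase_swap Finset.univ (fun m r => ∑ a, ∑ b, Γ b l (K m) x * (c a (K r) x
              * ξ i (Function.update (Function.update K m b) r a) x))]
      rw [show (∑ q, ∑ p ∈ Finset.univ.erase q, ∑ a, ∑ b, Γ b l (K p) x * (c a (K q) x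
              * ξ i (Function.update (Function.update K p b) q a) x))
          = ∑ q, ∑ a, ∑ p ∈ Finset.univ.erase q, ∑ b, Γ b l (K p) x * (c a (K q) x
              * ξ i (Function.update (Function.update K p b) q a) x) from
        Finset.sum_congr rfl fun q _ => Finset.sum_comm]
      refine Finset.sum_congr rfl fun p _ => Finset.sum_congr rfl fun a _ =>
        Finset.sum_congr rfl fun q hq => Finset.sum_congr rfl fun b _ => ?_
      rw [Function.update_comm (Finset.ne_of_mem_erase hq)]
      ring
  -- RHS distribution
  have hR : (∑ p, ∑ a, (pd (c a (K p)) l x - ∑ b, Γ a l b x * c b (K p) x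
        + ∑ b, Γ b l (K p) x * c a b x) * ξ i (Function.update K p a) x)
      = (∑ p, ∑ a, pd (c a (K p)) l x * ξ i (Function.update K p a) x)
        - (∑ p, ∑ a, ∑ b, c a (K p) x * (Γ b l a x * ξ i (Function.update K p b) x))
        + ∑ p, ∑ a, ∑ b, Γ b l (K p) x * (c a b x * ξ i (Function.update K p a) x) := by
    rw [show (∑ p, ∑ a, (pd (c a (K p)) l x - ∑ b, Γ a l b x * c b (K p) x
          + ∑ b, Γ b l (K p) x * c a b x) * ξ i (Function.update K p a) x)
        = ∑ p, ∑ a, (pd (c a (K p)) l x * ξ i (Function.update K p a) x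
            - (∑ b, Γ a l b x * c b (K p) x) * ξ i (Function.update K p a) x
            + (∑ b, Γ b l (K p) x * c a b x) * ξ i (Function.update K p a) x) from
      Finset.sum_congr rfl fun p _ => Finset.sum_congr rfl fun a _ => by ring]
    simp only [Finset.sum_add_distrib, Finset.sum_sub_distrib]
    congr 1
    congr 1
    · -- C matching with a-b swap
      refine Finset.sum_congr rfl fun p _ => ?_
      rw [show (Finset.sum Finset.univ fun a => (∑ b, Γ a l b x * c b (K p) x)
            * ξ i (Function.update K p a) x)
          = ∑ a, ∑ b, Γ a l b x * c b (K p) x * ξ i (Function.update K p a) x from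
        Finset.sum_congr rfl fun a _ => Finset.sum_mul _ _ _]
      rw [Finset.sum_comm]
      refine Finset.sum_congr rfl fun a _ => Finset.sum_congr rfl fun b _ => ?_
      ring
    · refine Finset.sum_congr rfl fun p _ => Finset.sum_congr rfl fun a _ => ?_
      rw [Finset.sum_mul]
      exact Finset.sum_congr rfl fun b _ => by ring
  rw [h1, h2, h3, hR]
  ring
end


section
variable {n k : ℕ}
  {Γ : Fin n → Fin n → Fin n → (Fin n → ℝ) → ℝ}
  {ξ : Fin n → (Fin k → Fin n) → (Fin n → ℝ) → ℝ}
  {x : Fin n → ℝ}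
  (hdG : ∀ i a b, DifferentiableAt ℝ (Γ i a b) x)
  (hdX : ∀ i K, DifferentiableAt ℝ (ξ i K) x)
  (hpdxi : ∀ i (K : Fin k → Fin n) r, pd (ξ i K) r x = ∑ a, Γ i r a x * ξ a K x
      - ∑ p, ∑ a, Γ a r (K p) x * ξ i (Function.update K p a) x)
  (hRt0 : ∀ i r j c, Rtil Γ i r j c x = 0)
  (hRh0 : ∀ i r j c, Rhat Γ i r j c x = 0)

include hdG hdX hpdxi hRt0 hRh0 in
lemma S3 (i : Fin n) (K : Fin k → Fin n) (r l : Fin n) :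
    pd (Phi Γ ξ i K r) l x - ∑ b, Γ i l b x * Phi Γ ξ b K r x
      + ∑ p, ∑ b, Γ b l (K p) x * Phi Γ ξ i (Function.update K p b) r x
      + ∑ b, Γ b l r x * Phi Γ ξ i K b x
    = - ∑ p, ∑ a, (pd (Γ a l (K p)) r x + ∑ c, Γ c l r x * Γ a c (K p) x)
        * ξ i (Function.update K p a) x := by
  classical
  have dU : ∀ (i' : Fin n) (K' : Fin k → Fin n),
      DifferentiableAt ℝ (fun y => ∑ a, (Γ i' r a y - Γ i' a r y) * ξ a K' y) x :=
    fun i' K' => DifferentiableAt.fun_sum fun a _ =>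
      (((hdG i' r a).sub (hdG i' a r)).mul (hdX a K'))
  have dV : ∀ (i' : Fin n) (K' : Fin k → Fin n),
      DifferentiableAt ℝ
        (fun y => ∑ p, ∑ a, Γ a r (K' p) y * ξ i' (Function.update K' p a) y) x :=
    fun i' K' => DifferentiableAt.fun_sum fun p _ => DifferentiableAt.fun_sum fun a _ =>
      ((hdG a r (K' p)).mul (hdX i' (Function.update K' p a)))
  -- E1
  have E1 : pd (Phi Γ ξ i K r) l x
      = pd (fun y => ∑ a, (Γ i r a y - Γ i a r y) * ξ a K y) l x
        - pd (fun y => ∑ p, ∑ a, Γ a r (K p) y * ξ i (Function.update K p a) y) l x := by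
    have e : Phi Γ ξ i K r = fun y => (∑ a, (Γ i r a y - Γ i a r y) * ξ a K y)
        - ∑ p, ∑ a, Γ a r (K p) y * ξ i (Function.update K p a) y := rfl
    rw [e, pd_sub l (dU i K) (dV i K)]
  -- E2
  have E2 : (∑ b, Γ i l b x * Phi Γ ξ b K r x)
      = (∑ b, Γ i l b x * (∑ a, (Γ b r a x - Γ b a r x) * ξ a K x))
        - ∑ b, Γ i l b x * (∑ p, ∑ a, Γ a r (K p) x * ξ b (Function.update K p a) x) := by
    rw [← Finset.sum_sub_distrib]
    exact Finset.sum_congr rfl fun b _ => by rw [show Phi Γ ξ b K r x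
      = (∑ a, (Γ b r a x - Γ b a r x) * ξ a K x)
        - ∑ p, ∑ a, Γ a r (K p) x * ξ b (Function.update K p a) x from rfl]; ring
  -- E3
  have E3 : (∑ p, ∑ b, Γ b l (K p) x * Phi Γ ξ i (Function.update K p b) r x)
      = (∑ p, ∑ b, Γ b l (K p) x
            * (∑ a, (Γ i r a x - Γ i a r x) * ξ a (Function.update K p b) x))
        - ∑ p, ∑ b, Γ b l (K p) x *
            (∑ q, ∑ a, Γ a r (Function.update K p b q) x
              * ξ i (Function.update (Function.update K p b) q a) x) := by
    rw [← Finset.sum_sub_distrib]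
    refine Finset.sum_congr rfl fun p _ => ?_
    rw [← Finset.sum_sub_distrib]
    exact Finset.sum_congr rfl fun b _ => by rw [show Phi Γ ξ i (Function.update K p b) r x
      = (∑ a, (Γ i r a x - Γ i a r x) * ξ a (Function.update K p b) x)
        - ∑ q, ∑ a, Γ a r (Function.update K p b q) x
            * ξ i (Function.update (Function.update K p b) q a) x from rfl]; ring
  -- E4
  have E4 : (∑ b, Γ b l r x * Phi Γ ξ i K b x)
      = (∑ b, Γ b l r x * (∑ a, (Γ i b a x - Γ i a b x) * ξ a K x))
        - ∑ b, Γ b l r x * (∑ p, ∑ a, Γ a b (K p) x * ξ i (Function.update K p a) x) := by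
    rw [← Finset.sum_sub_distrib]
    exact Finset.sum_congr rfl fun b _ => by rw [show Phi Γ ξ i K b x
      = (∑ a, (Γ i b a x - Γ i a b x) * ξ a K x)
        - ∑ p, ∑ a, Γ a b (K p) x * ξ i (Function.update K p a) x from rfl]; ring
  -- CL1 / CL2 instances
  have c1 := CL1 hdX hpdxi (fun b a y => Γ b r a y - Γ b a r y)
    (fun b a => (hdG b r a).sub (hdG b a r)) i K l
  have c2 := CL2 hdX hpdxi (fun a w y => Γ a r w y) (fun a w => hdG a r w) i K l
  -- E7 : F1 reorder
  have E7 : (∑ b, Γ b l r x * (∑ a, (Γ i b a x - Γ i a b x) * ξ a K x))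
      = ∑ a, (∑ b, Γ b l r x * (Γ i b a x - Γ i a b x)) * ξ a K x := by
    rw [show (∑ b, Γ b l r x * (∑ a, (Γ i b a x - Γ i a b x) * ξ a K x))
        = ∑ b, ∑ a, Γ b l r x * (Γ i b a x - Γ i a b x) * ξ a K x from
      Finset.sum_congr rfl fun b _ => by
        rw [Finset.mul_sum]; exact Finset.sum_congr rfl fun a _ => by ring]
    rw [Finset.sum_comm]
    exact Finset.sum_congr rfl fun a _ => by rw [Finset.sum_mul]
  -- E8 : F2 reorder
  have E8 : (∑ b, Γ b l r x * (∑ p, ∑ a, Γ a b (K p) x * ξ i (Function.update K p a) x))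
      = ∑ p, ∑ a, (∑ b, Γ b l r x * Γ a b (K p) x) * ξ i (Function.update K p a) x := by
    rw [show (∑ b, Γ b l r x * (∑ p, ∑ a, Γ a b (K p) x * ξ i (Function.update K p a) x))
        = ∑ b, ∑ p, ∑ a, Γ b l r x * Γ a b (K p) x * ξ i (Function.update K p a) x from
      Finset.sum_congr rfl fun b _ => by
        rw [Finset.mul_sum]
        refine Finset.sum_congr rfl fun p _ => ?_
        rw [Finset.mul_sum]
        exact Finset.sum_congr rfl fun a _ => by ring]
    rw [Finset.sum_comm]
    refine Finset.sum_congr rfl fun p _ => ?_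
    rw [Finset.sum_comm]
    exact Finset.sum_congr rfl fun a _ => by rw [Finset.sum_mul]
  -- E9 : first coefficient vanishes
  have E9 : (∑ a, (pd (fun y => Γ i r a y - Γ i a r y) l x
        + ∑ b, ((Γ i r b x - Γ i b r x) * Γ b l a x - Γ i l b x * (Γ b r a x - Γ b a r x)))
          * ξ a K x)
      + (∑ a, (∑ b, Γ b l r x * (Γ i b a x - Γ i a b x)) * ξ a K x) = 0 := by
    rw [← Finset.sum_add_distrib]
    refine Finset.sum_eq_zero fun a _ => ?_
    have coef1 : pd (fun y => Γ i r a y - Γ i a r y) l x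
        + ∑ b, ((Γ i r b x - Γ i b r x) * Γ b l a x - Γ i l b x * (Γ b r a x - Γ b a r x))
        + ∑ b, Γ b l r x * (Γ i b a x - Γ i a b x)
        = Rtil Γ i l r a x + Rtil Γ i a l r x + Rhat Γ i r a l x := by
      rw [pd_sub l (hdG i r a) (hdG i a r)]
      unfold Rtil Rhat
      have merge : (∑ b, ((Γ i r b x - Γ i b r x) * Γ b l a x - Γ i l b x * (Γ b r a x - Γ b a r x)))
            + ∑ b, Γ b l r x * (Γ i b a x - Γ i a b x)
          = (∑ b, (Γ b l a x * Γ i r b x - Γ b r a x * Γ i l b x))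
            + ((∑ b, (Γ b a r x * Γ i l b x - Γ b l r x * Γ i a b x))
              + ∑ b, (Γ b l r x * Γ i b a x - Γ b l a x * Γ i b r x)) := by
        rw [← Finset.sum_add_distrib, ← Finset.sum_add_distrib, ← Finset.sum_add_distrib]
        exact Finset.sum_congr rfl fun b _ => by ring
      linear_combination merge
    have : (pd (fun y => Γ i r a y - Γ i a r y) l x
        + ∑ b, ((Γ i r b x - Γ i b r x) * Γ b l a x - Γ i l b x * (Γ b r a x - Γ b a r x)))
        + (∑ b, Γ b l r x * (Γ i b a x - Γ i a b x)) = 0 := by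
      rw [show (pd (fun y => Γ i r a y - Γ i a r y) l x
        + ∑ b, ((Γ i r b x - Γ i b r x) * Γ b l a x - Γ i l b x * (Γ b r a x - Γ b a r x)))
        + (∑ b, Γ b l r x * (Γ i b a x - Γ i a b x))
        = pd (fun y => Γ i r a y - Γ i a r y) l x
        + ∑ b, ((Γ i r b x - Γ i b r x) * Γ b l a x - Γ i l b x * (Γ b r a x - Γ b a r x))
        + ∑ b, Γ b l r x * (Γ i b a x - Γ i a b x) from by ring, coef1,
        hRt0 i l r a, hRt0 i a l r, hRh0 i r a l]
      ring
    rw [← add_mul, this, zero_mul]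
  -- E10 : second coefficient reduces via curvature
  have E10 : (∑ p, ∑ a, (pd (fun y => Γ a r (K p) y) l x
        - ∑ b, Γ a l b x * Γ b r (K p) x + ∑ b, Γ b l (K p) x * Γ a r b x)
          * ξ i (Function.update K p a) x)
      + (∑ p, ∑ a, (∑ b, Γ b l r x * Γ a b (K p) x) * ξ i (Function.update K p a) x)
      = ∑ p, ∑ a, (pd (Γ a l (K p)) r x + ∑ c, Γ c l r x * Γ a c (K p) x)
          * ξ i (Function.update K p a) x := by
    rw [← Finset.sum_add_distrib]
    refine Finset.sum_congr rfl fun p _ => ?_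
    rw [← Finset.sum_add_distrib]
    refine Finset.sum_congr rfl fun a _ => ?_
    rw [← add_mul]
    congr 1
    have hR := hRt0 a l r (K p)
    unfold Rtil at hR
    have e : (∑ b, (Γ b l (K p) x * Γ a r b x - Γ b r (K p) x * Γ a l b x))
        = (∑ b, Γ b l (K p) x * Γ a r b x) - ∑ b, Γ b r (K p) x * Γ a l b x := by
      rw [Finset.sum_sub_distrib]
    have e2 : (∑ b, Γ a l b x * Γ b r (K p) x) = ∑ b, Γ b r (K p) x * Γ a l b x :=
      Finset.sum_congr rfl fun b _ => by ring
    have e3 : (∑ b, Γ b l r x * Γ a b (K p) x) = ∑ c, Γ c l r x * Γ a c (K p) x := rfl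
    rw [e] at hR
    rw [e2, e3]
    linarith [hR]
  -- final assembly
  linear_combination E1 - E2 + E3 + E4 + c1 - c2 + E7 - E8 + E9 - E10
end


/-- If R̃ = 0 and R̂ = 0 on U and ξ is a smooth ∇̃-parallel (alternating) (1,k)-form on U,
then d̂ξ is a ∇̃-parallel (1,k+1)-form on U. -/
theorem stmt12 {n k : ℕ} (hn : 1 ≤ n) (U : Set (Fin n → ℝ)) (hU : IsOpen U)
    (Γ : Fin n → Fin n → Fin n → (Fin n → ℝ) → ℝ)
    (hΓ : ∀ i a b, ContDiffOn ℝ (⊤ : ℕ∞) (Γ i a b) U)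
    (hRt : ∀ x ∈ U, ∀ i r j l, Rtil Γ i r j l x = 0)
    (hRh : ∀ x ∈ U, ∀ i r j l, Rhat Γ i r j l x = 0)
    (ξ : Fin n → (Fin k → Fin n) → (Fin n → ℝ) → ℝ)
    (hsm : ∀ i J, ContDiffOn ℝ (⊤ : ℕ∞) (ξ i J) U)
    (halt : ∀ i (J : Fin k → Fin n) (σ : Equiv.Perm (Fin k)) (x : Fin n → ℝ),
      ξ i (J ∘ σ) x = ((Equiv.Perm.sign σ : ℤ) : ℝ) * ξ i J x)
    (hpar : ∀ x ∈ U, ∀ i J l, nabForm Γ ξ i J l x = 0) :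
    (∀ i (J : Fin (k + 1) → Fin n) (σ : Equiv.Perm (Fin (k + 1))), ∀ x ∈ U,
      dhat Γ ξ i (J ∘ σ) x = ((Equiv.Perm.sign σ : ℤ) : ℝ) * dhat Γ ξ i J x)
    ∧ (∀ x ∈ U, ∀ i (J : Fin (k + 1) → Fin n) l,
        pd (dhat Γ ξ i J) l x - ∑ a, Γ i l a x * dhat Γ ξ a J x
          + ∑ m, ∑ a, Γ a l (J m) x * dhat Γ ξ i (Function.update J m a) x = 0) := by
  classical
  constructor
  · exact fun i J σ x _ => dhat_alt Γ ξ halt i J σ x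
  intro x hx i J l
  -- pointwise helpers
  have hdGx : ∀ i a b, DifferentiableAt ℝ (Γ i a b) x := fun i a b => diffG hU hΓ hx i a b
  have hdXx : ∀ i K, DifferentiableAt ℝ (ξ i K) x := fun i K => diffX hU hsm hx i K
  have hpdxix : ∀ i (K : Fin k → Fin n) r, pd (ξ i K) r x = ∑ a, Γ i r a x * ξ a K x
      - ∑ p, ∑ a, Γ a r (K p) x * ξ i (Function.update K p a) x :=
    fun i K r => pd_xi hpar hx i K r
  have hRt0 : ∀ i r j c, Rtil Γ i r j c x = 0 := fun i r j c => hRt x hx i r j c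
  have hRh0 : ∀ i r j c, Rhat Γ i r j c x = 0 := fun i r j c => hRh x hx i r j c
  -- A1 : derivative of dhat via Phi
  have hEq : Set.EqOn (dhat Γ ξ i J)
      (fun y => ∑ m : Fin (k+1), (-1:ℝ)^(m:ℕ) * Phi Γ ξ i (J ∘ m.succAbove) (J m) y) U := by
    intro y hy
    unfold dhat
    refine Finset.sum_congr rfl fun m _ => ?_
    rw [show (fun t => J (m.succAbove t)) = J ∘ m.succAbove from rfl,
      D_eq_Phi hpar hy i (J ∘ m.succAbove) (J m)]
  have A1 : pd (dhat Γ ξ i J) l x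
      = ∑ m : Fin (k+1), (-1:ℝ)^(m:ℕ) * pd (Phi Γ ξ i (J ∘ m.succAbove) (J m)) l x := by
    rw [pd_congr_nhds l (Filter.eventuallyEq_of_mem (hU.mem_nhds hx) hEq),
      pd_sum l (fun m _ => (diffPhi hU hΓ hsm hx i (J ∘ m.succAbove) (J m)).const_mul _)]
    exact Finset.sum_congr rfl fun m _ => pd_const_mul _ _ _ _
  -- values of dhat at x
  have hval : ∀ (b : Fin n) (J' : Fin (k+1) → Fin n), dhat Γ ξ b J' x
      = ∑ m : Fin (k+1), (-1:ℝ)^(m:ℕ) * Phi Γ ξ b (J' ∘ m.succAbove) (J' m) x := by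
    intro b J'
    unfold dhat
    refine Finset.sum_congr rfl fun m _ => ?_
    rw [show (fun t => J' (m.succAbove t)) = J' ∘ m.succAbove from rfl,
      D_eq_Phi hpar hx b (J' ∘ m.succAbove) (J' m)]
  have A2 : (∑ a, Γ i l a x * dhat Γ ξ a J x)
      = ∑ m : Fin (k+1), (-1:ℝ)^(m:ℕ)
          * ∑ a, Γ i l a x * Phi Γ ξ a (J ∘ m.succAbove) (J m) x := by
    rw [show (∑ a, Γ i l a x * dhat Γ ξ a J x)
        = ∑ a, ∑ m : Fin (k+1), Γ i l a x
            * ((-1:ℝ)^(m:ℕ) * Phi Γ ξ a (J ∘ m.succAbove) (J m) x) from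
      Finset.sum_congr rfl fun a _ => by rw [hval a J, Finset.mul_sum]]
    rw [Finset.sum_comm]
    refine Finset.sum_congr rfl fun m _ => ?_
    rw [Finset.mul_sum]
    exact Finset.sum_congr rfl fun a _ => by ring
  have A3 : (∑ q, ∑ a, Γ a l (J q) x * dhat Γ ξ i (Function.update J q a) x)
      = ∑ m : Fin (k+1), (-1:ℝ)^(m:ℕ) *
          ((∑ b, Γ b l (J m) x * Phi Γ ξ i (J ∘ m.succAbove) b x)
            + ∑ p, ∑ b, Γ b l ((J ∘ m.succAbove) p) x
              * Phi Γ ξ i (Function.update (J ∘ m.succAbove) p b) (J m) x) := by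
    rw [show (∑ q, ∑ a, Γ a l (J q) x * dhat Γ ξ i (Function.update J q a) x)
        = ∑ q, ∑ m : Fin (k+1), ∑ a, (-1:ℝ)^(m:ℕ) * (Γ a l (J q) x
            * Phi Γ ξ i ((Function.update J q a) ∘ m.succAbove) ((Function.update J q a) m) x) from
      Finset.sum_congr rfl fun q _ => by
        rw [show (∑ a, Γ a l (J q) x * dhat Γ ξ i (Function.update J q a) x)
            = ∑ a, ∑ m : Fin (k+1), (-1:ℝ)^(m:ℕ) * (Γ a l (J q) x
              * Phi Γ ξ i ((Function.update J q a) ∘ m.succAbove) ((Function.update J q a) m) x) from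
          Finset.sum_congr rfl fun a _ => by
            rw [hval i (Function.update J q a), Finset.mul_sum]
            exact Finset.sum_congr rfl fun m _ => by ring]
        rw [Finset.sum_comm]]
    rw [Finset.sum_comm]
    refine Finset.sum_congr rfl fun m _ => ?_
    rw [Fin.sum_univ_succAbove (fun q => ∑ a, (-1:ℝ)^(m:ℕ) * (Γ a l (J q) x
        * Phi Γ ξ i ((Function.update J q a) ∘ m.succAbove) ((Function.update J q a) m) x)) m,
      mul_add]
    congr 1
    · -- q = m part
      rw [Finset.mul_sum]
      refine Finset.sum_congr rfl fun b _ => ?_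
      rw [update_comp_succAbove J m b, Function.update_self]
    · -- removed-slot part : q = succAbove
      rw [Finset.mul_sum]
      refine Finset.sum_congr rfl fun p _ => ?_
      rw [Finset.mul_sum]
      refine Finset.sum_congr rfl fun b _ => ?_
      rw [update_succAbove_comp J m p b,
        Function.update_of_ne (Fin.succAbove_ne m p).symm]
      simp only [Function.comp_apply]
  -- S3 for each m
  have S3m : ∀ m : Fin (k+1),
      pd (Phi Γ ξ i (J ∘ m.succAbove) (J m)) l x
        - ∑ b, Γ i l b x * Phi Γ ξ b (J ∘ m.succAbove) (J m) x
        + ∑ p, ∑ b, Γ b l ((J ∘ m.succAbove) p) x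
            * Phi Γ ξ i (Function.update (J ∘ m.succAbove) p b) (J m) x
        + ∑ b, Γ b l (J m) x * Phi Γ ξ i (J ∘ m.succAbove) b x
      = - ∑ p, ∑ a, (pd (Γ a l ((J ∘ m.succAbove) p)) (J m) x
          + ∑ c, Γ c l (J m) x * Γ a c ((J ∘ m.succAbove) p) x)
            * ξ i (Function.update (J ∘ m.succAbove) p a) x :=
    fun m => S3 hdGx hdXx hpdxix hRt0 hRh0 i (J ∘ m.succAbove) (J m) l
  -- the skew-symmetric pairing matrix
  set G : Fin (k+1) → Fin (k+1) → ℝ := fun m q =>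
    if q = m then 0 else (-1:ℝ)^(m:ℕ) * ∑ a,
      (pd (Γ a l (J q)) (J m) x + ∑ c, Γ c l (J m) x * Γ a c (J q) x)
        * ξ i ((Function.update J q a) ∘ m.succAbove) x with hG
  have conv : ∀ m : Fin (k+1),
      (-1:ℝ)^(m:ℕ) * (- ∑ p, ∑ a, (pd (Γ a l ((J ∘ m.succAbove) p)) (J m) x
          + ∑ c, Γ c l (J m) x * Γ a c ((J ∘ m.succAbove) p) x)
            * ξ i (Function.update (J ∘ m.succAbove) p a) x)
      = - ∑ q, G m q := by
    intro m
    have e1 : (∑ q, G m q)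
        = (-1:ℝ)^(m:ℕ) * ∑ p, ∑ a, (pd (Γ a l ((J ∘ m.succAbove) p)) (J m) x
            + ∑ c, Γ c l (J m) x * Γ a c ((J ∘ m.succAbove) p) x)
              * ξ i (Function.update (J ∘ m.succAbove) p a) x := by
      rw [Fin.sum_univ_succAbove (fun q => G m q) m]
      rw [show G m m = 0 from if_pos rfl, zero_add, Finset.mul_sum]
      refine Finset.sum_congr rfl fun p _ => ?_
      rw [show G m (m.succAbove p) = (-1:ℝ)^(m:ℕ) * ∑ a,
          (pd (Γ a l (J (m.succAbove p))) (J m) x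
            + ∑ c, Γ c l (J m) x * Γ a c (J (m.succAbove p)) x)
              * ξ i ((Function.update J (m.succAbove p) a) ∘ m.succAbove) x from
        if_neg (Fin.succAbove_ne m p)]
      congr 1
      refine Finset.sum_congr rfl fun a _ => ?_
      rw [update_succAbove_comp J m p a]
      simp only [Function.comp_apply]
    rw [e1]
    ring
  have skew : ∀ m q : Fin (k+1), G m q = - G q m := by
    intro m q
    rcases eq_or_ne q m with rfl | hqm
    · rw [show G q q = 0 from if_pos rfl]; ring
    · rw [show G m q = (-1:ℝ)^(m:ℕ) * ∑ a,
          (pd (Γ a l (J q)) (J m) x + ∑ c, Γ c l (J m) x * Γ a c (J q) x)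
            * ξ i ((Function.update J q a) ∘ m.succAbove) x from if_neg hqm,
        show G q m = (-1:ℝ)^(q:ℕ) * ∑ a,
          (pd (Γ a l (J m)) (J q) x + ∑ c, Γ c l (J q) x * Γ a c (J m) x)
            * ξ i ((Function.update J m a) ∘ q.succAbove) x from if_neg (Ne.symm hqm)]
      have hk : ∀ a : Fin n, ξ i ((Function.update J q a) ∘ m.succAbove) x
          = -((-1:ℝ)^((m:ℕ)+(q:ℕ))) * ξ i ((Function.update J m a) ∘ q.succAbove) x :=
        fun a => kcl (fun K => ξ i K x) (fun K σ => halt i K σ x) J a m q (Ne.symm hqm)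
      have hsym : ∀ a : Fin n,
          pd (Γ a l (J q)) (J m) x + ∑ c, Γ c l (J m) x * Γ a c (J q) x
          = pd (Γ a l (J m)) (J q) x + ∑ c, Γ c l (J q) x * Γ a c (J m) x := by
        intro a
        have h := hRh0 a (J m) (J q) l
        unfold Rhat at h
        rw [Finset.sum_sub_distrib] at h
        linarith
      have e2 : (∑ a, (pd (Γ a l (J q)) (J m) x + ∑ c, Γ c l (J m) x * Γ a c (J q) x)
            * ξ i ((Function.update J q a) ∘ m.succAbove) x)
          = (-((-1:ℝ)^((m:ℕ)+(q:ℕ)))) * ∑ a,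
            (pd (Γ a l (J m)) (J q) x + ∑ c, Γ c l (J q) x * Γ a c (J m) x)
              * ξ i ((Function.update J m a) ∘ q.succAbove) x := by
        rw [Finset.mul_sum]
        refine Finset.sum_congr rfl fun a _ => ?_
        rw [hk a, hsym a]
        ring
      rw [e2]
      have hm : ((-1:ℝ))^((m:ℕ)) * ((-1:ℝ))^((m:ℕ)) = 1 := by
        rw [← pow_add]; exact Even.neg_one_pow ⟨(m:ℕ), rfl⟩
      linear_combination (-((-1:ℝ)^((q:ℕ))) * (∑ a,
        (pd (Γ a l (J m)) (J q) x + ∑ c, Γ c l (J q) x * Γ a c (J m) x)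
          * ξ i ((Function.update J m a) ∘ q.succAbove) x)) * hm
  have total : (∑ m : Fin (k+1), ∑ q : Fin (k+1), G m q) = 0 := by
    have h1 : (∑ m : Fin (k+1), ∑ q : Fin (k+1), G m q)
        = ∑ q : Fin (k+1), ∑ m : Fin (k+1), G m q := Finset.sum_comm
    have h2 : (∑ q : Fin (k+1), ∑ m : Fin (k+1), G m q)
        = - ∑ q : Fin (k+1), ∑ m : Fin (k+1), G q m := by
      rw [← Finset.sum_neg_distrib]
      refine Finset.sum_congr rfl fun q _ => ?_
      rw [← Finset.sum_neg_distrib]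
      exact Finset.sum_congr rfl fun m _ => skew m q
    have h3 : (∑ q : Fin (k+1), ∑ m : Fin (k+1), G q m)
        = ∑ m : Fin (k+1), ∑ q : Fin (k+1), G m q := rfl
    rw [h3] at h2
    rw [h2] at h1
    linarith
  -- final assembly
  rw [A1, A2, A3, ← Finset.sum_sub_distrib, ← Finset.sum_add_distrib]
  rw [show (∑ m : Fin (k+1),
        ((-1:ℝ)^(m:ℕ) * pd (Phi Γ ξ i (J ∘ m.succAbove) (J m)) l x
          - (-1:ℝ)^(m:ℕ) * ∑ a, Γ i l a x * Phi Γ ξ a (J ∘ m.succAbove) (J m) x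
          + (-1:ℝ)^(m:ℕ) *
            ((∑ b, Γ b l (J m) x * Phi Γ ξ i (J ∘ m.succAbove) b x)
              + ∑ p, ∑ b, Γ b l ((J ∘ m.succAbove) p) x
                * Phi Γ ξ i (Function.update (J ∘ m.succAbove) p b) (J m) x)))
      = ∑ m : Fin (k+1), - ∑ q, G m q from ?_]
  · rw [Finset.sum_neg_distrib, total, neg_zero]
  · refine Finset.sum_congr rfl fun m _ => ?_
    rw [← conv m, ← S3m m]
    ring
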